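/- Let n ≥ 2, let F be a field of characteristic ≠ 2 and α ∈ F with 1 + 2α(n−1) ≠ 0. Then the Matsuo algebra M_α(𝒜_n^±) over F is unital with identity element u = (1 + 2α(n−1))⁻¹ Σ_{t ∈ T_n, ε = ±1} (t,ε), i.e. u·x = x for every x ∈ M_α(𝒜_n^±). -/

import Mathlib

open Equiv Finsupp

instance {n : ℕ} : DecidablePred (Equiv.Perm.IsSwap : Equiv.Perm (Fin n) → Prop) := by
  intro σ; unfold Equiv.Perm.IsSwap; infer_instance

abbrev Tr (n : ℕ) : Type := {σ : Equiv.Perm (Fin (n + 1)) // σ.IsSwap}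

/-- Two transpositions are collinear when their supports share exactly one point. -/
def Coll {n : ℕ} (s t : Tr n) : Prop :=
  (s.1.support ∩ t.1.support).card = 1

instance {n : ℕ} (s t : Tr n) : Decidable (Coll s t) := by
  unfold Coll; infer_instance

/-- The third point `s·t·s` of the line through collinear transpositions. -/
def wedge {n : ℕ} (s t : Tr n) : Tr n :=
  ⟨s.1 * t.1 * s.1, by
    obtain ⟨x, y, hxy, ht⟩ := t.2
    obtain ⟨a, b, hab, hs⟩ := s.2
    have hinv : s.1⁻¹ = s.1 := by rw [hs]; exact Equiv.swap_inv a b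
    exact ⟨s.1 x, s.1 y, fun h => hxy (s.1.injective h), by
      rw [ht, Equiv.swap_apply_apply, hinv]⟩⟩

/-- The point set of the double graph `𝒜_n^± = 𝒟_{n+1}`: pairs `(t, ε)` with `t` a
transposition of `Sym(n+1)` and `ε ∈ {+1, -1}`. -/
abbrev DTr (n : ℕ) : Type := Tr n × ℤˣ

variable (F : Type*) [Field F]

/-- Product of two basis points of the Matsuo algebra `M_α(𝒜_n^±)`. -/
noncomputable def pointMulD {n : ℕ} (α : F) (p q : DTr n) : DTr n →₀ F :=
  if p = q then Finsupp.single p 1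
  else if Coll p.1 q.1 then
    (α / 2) • (Finsupp.single p 1 + Finsupp.single q 1 -
      Finsupp.single (wedge p.1 q.1, p.2 * q.2) 1)
  else 0

/-- The multiplication of the Matsuo algebra `M_α(𝒜_n^±)`, as a bilinear map on the
free module on `T_n × {+1, -1}`. -/
noncomputable def matsuoMulD (n : ℕ) (α : F) :
    (DTr n →₀ F) →ₗ[F] (DTr n →₀ F) →ₗ[F] (DTr n →₀ F) :=
  Finsupp.lsum F fun p =>
    LinearMap.toSpanSingleton F _
      (Finsupp.lsum F fun q => LinearMap.toSpanSingleton F _ (pointMulD F α p q))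

/-!
For a basis point `q`, the term `p = q` of `∑ p · q` gives `q`, and each `p` collinear with `q`
gives `(α/2)(p + q − p∧q)`. Since `p ↦ p∧q` permutes the points collinear with `q`, the `p` and
`p∧q` terms cancel, leaving `(1 + (α/2)·N) q` where `N = 4(n − 1)` is the number of points
collinear with `q`. So `∑ p` acts as the scalar `1 + 2α(n − 1)`.
-/

open Finset

theorem Equiv.Perm.IsSwap.eq_swap_apply_of_mem_support {α : Type*} [DecidableEq α] [Fintype α]
    {σ : Perm α} (hσ : σ.IsSwap) {a : α} (ha : a ∈ σ.support) : σ = swap a (σ a) := by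
  refine hσ.isCycle.eq_swap_of_apply_apply_eq_self (Perm.mem_support.mp ha) ?_
  obtain ⟨x, y, -, rfl⟩ := hσ
  rw [← Perm.mul_apply, swap_mul_self, Perm.one_apply]

section Collinearity

variable {n : ℕ}

theorem Tr.one_le (t : Tr n) : 1 ≤ n := by
  have := card_le_univ t.1.support
  rw [Perm.card_support_eq_two.mpr t.2, Fintype.card_fin] at this
  omega

theorem not_coll_self (t : Tr n) : ¬Coll t t := by
  simp [Coll, Perm.card_support_eq_two.mpr t.2]

theorem coll_of_eq_swap {a b c : Fin (n + 1)} (hab : a ≠ b) (hac : a ≠ c) (hbc : b ≠ c)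
    {s t : Tr n} (hs : s.1 = swap a b) (ht : t.1 = swap a c) : Coll s t := by
  rw [Coll, hs, ht, Perm.support_swap hab, Perm.support_swap hac, card_eq_one]
  exact ⟨a, by ext; simp; grind⟩

theorem Coll.exists_eq_swap {s t : Tr n} (h : Coll s t) :
    ∃ a b c : Fin (n + 1), a ≠ b ∧ a ≠ c ∧ b ≠ c ∧ s.1 = swap a b ∧ t.1 = swap a c := by
  obtain ⟨a, ha⟩ := card_eq_one.mp h
  obtain ⟨has, hat⟩ := mem_inter.mp (ha ▸ mem_singleton_self a)
  refine ⟨a, s.1 a, t.1 a, (Perm.mem_support.mp has).symm, (Perm.mem_support.mp hat).symm,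
    fun hst => ?_, s.2.eq_swap_apply_of_mem_support has, t.2.eq_swap_apply_of_mem_support hat⟩
  have : s.1 a ∈ s.1.support ∩ t.1.support := by
    rw [mem_inter, Perm.apply_mem_support, hst, Perm.apply_mem_support]
    exact ⟨has, hat⟩
  rw [ha, mem_singleton] at this
  exact Perm.mem_support.mp has this

theorem val_wedge {a b c : Fin (n + 1)} (hac : a ≠ c) (hbc : b ≠ c)
    {s t : Tr n} (hs : s.1 = swap a b) (ht : t.1 = swap a c) :
    (wedge s t).1 = swap b c := by
  show s.1 * t.1 * s.1 = swap b c
  rw [hs, ht, swap_comm a c, swap_mul_swap_mul_swap hac.symm hbc.symm]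

theorem Coll.wedge_left {s t : Tr n} (h : Coll s t) : Coll (wedge s t) t := by
  obtain ⟨a, b, c, hab, hac, hbc, hs, ht⟩ := h.exists_eq_swap
  exact coll_of_eq_swap hbc.symm hac.symm hab.symm
    (by rw [val_wedge hac hbc hs ht, swap_comm]) (by rw [ht, swap_comm])

theorem Coll.wedge_wedge {s t : Tr n} (h : Coll s t) : wedge (wedge s t) t = s := by
  obtain ⟨a, b, c, hab, hac, hbc, hs, ht⟩ := h.exists_eq_swap
  have hw : (wedge s t).1 = swap c b := by rw [val_wedge hac hbc hs ht, swap_comm]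
  exact Subtype.ext <| by
    rw [val_wedge hac.symm hab.symm hw (by rw [ht, swap_comm]), swap_comm, hs]

/-- `(x, y) ↦ (x y)` is a bijection from `supp t × (supp t)ᶜ` onto the transpositions collinear
with `t`. -/
theorem card_filter_coll (t : Tr n) : #{s : Tr n | Coll s t} = 2 * (n - 1) := by
  have key : #(t.1.support ×ˢ t.1.supportᶜ) = #{s : Tr n | Coll s t} := by
    refine card_bij (fun p hp => ⟨swap p.1 p.2, p.1, p.2,
      ne_of_mem_of_not_mem (mem_product.mp hp).1 (mem_compl.mp (mem_product.mp hp).2), rfl⟩)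
      ?_ ?_ ?_
    · rintro ⟨x, y⟩ hp
      obtain ⟨hx, hy⟩ : x ∈ t.1.support ∧ y ∉ t.1.support := by simpa using hp
      have hty : t.1 x ≠ y := ne_of_mem_of_not_mem (Perm.apply_mem_support.mpr hx) hy
      exact mem_filter.mpr ⟨mem_univ _, coll_of_eq_swap (ne_of_mem_of_not_mem hx hy)
        (Perm.mem_support.mp hx).symm hty.symm rfl (t.2.eq_swap_apply_of_mem_support hx)⟩
    · rintro ⟨x, y⟩ hp ⟨x', y'⟩ hp' heq
      obtain ⟨hx, hy⟩ : x ∈ t.1.support ∧ y ∉ t.1.support := by simpa using hp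
      obtain ⟨hx', hy'⟩ : x' ∈ t.1.support ∧ y' ∉ t.1.support := by simpa using hp'
      have hval : swap x y = swap x' y' := congrArg Subtype.val heq
      have hxx' : x = x' := by
        have : x ∈ (swap x' y').support := by
          rw [← hval, Perm.support_swap (ne_of_mem_of_not_mem hx hy)]; simp
        rw [Perm.support_swap (ne_of_mem_of_not_mem hx' hy'), mem_insert, mem_singleton] at this
        exact this.resolve_right (ne_of_mem_of_not_mem hx hy')
      subst hxx'
      rw [swap_injective_of_left x hval]
    · intro s hs
      obtain ⟨a, b, c, hab, hac, hbc, hs, ht⟩ := (mem_filter.mp hs).2.exists_eq_swap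
      refine ⟨(a, b), ?_, Subtype.ext hs.symm⟩
      rw [mem_product, mem_compl, ht, Perm.support_swap hac]
      simp [hab.symm, hbc]
  rw [← key, card_product, card_compl, Perm.card_support_eq_two.mpr t.2, Fintype.card_fin]
  omega

end Collinearity

section MatsuoAlgebra

variable {n : ℕ}

theorem card_filter_coll_fst (q : DTr n) : #{p : DTr n | Coll p.1 q.1} = 2 * (2 * (n - 1)) := by
  rw [← univ_product_univ, filter_product_left (fun s => Coll s q.1), card_product,
    card_filter_coll, card_univ, Fintype.card_units_int, mul_comm]

theorem sum_single_wedge (q : DTr n) :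
    ∑ p ∈ {p : DTr n | Coll p.1 q.1}, single (wedge p.1 q.1, p.2 * q.2) (1 : F) =
      ∑ p ∈ {p : DTr n | Coll p.1 q.1}, single p 1 := by
  have hmaps : ∀ p ∈ ({p : DTr n | Coll p.1 q.1} : Finset (DTr n)),
      ((wedge p.1 q.1, p.2 * q.2) : DTr n) ∈ ({p : DTr n | Coll p.1 q.1} : Finset (DTr n)) :=
    fun p hp => mem_filter.mpr ⟨mem_univ _, (mem_filter.mp hp).2.wedge_left⟩
  have hinv : ∀ p ∈ ({p : DTr n | Coll p.1 q.1} : Finset (DTr n)),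
      ((wedge (wedge p.1 q.1) q.1, p.2 * q.2 * q.2) : DTr n) = p :=
    fun p hp => Prod.ext (mem_filter.mp hp).2.wedge_wedge (by simp [mul_assoc])
  exact sum_nbij' _ _ hmaps hmaps hinv hinv fun _ _ => rfl

theorem pointMulD_eq_ite_add_ite (α : F) (p q : DTr n) : pointMulD F α p q =
    (if p = q then single q 1 else 0) + if Coll p.1 q.1 then
      (α / 2) • (single p 1 + single q 1 - single (wedge p.1 q.1, p.2 * q.2) 1) else 0 := by
  unfold pointMulD
  by_cases hpq : p = q
  · subst hpq
    simp [not_coll_self]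
  · simp [hpq]

theorem sum_pointMulD_left (α : F) (q : DTr n) :
    ∑ p, pointMulD F α p q = (1 + 2 * α * ((n : F) - 1)) • single q 1 := by
  rw [sum_congr rfl fun p _ => pointMulD_eq_ite_add_ite F α p q, sum_add_distrib,
    Finset.sum_ite_eq', if_pos (mem_univ q), ← sum_filter, ← Finset.smul_sum, sum_sub_distrib,
    sum_add_distrib, sum_single_wedge, add_sub_cancel_left, sum_const, card_filter_coll_fst]
  -- also true when `2 = 0`, where `α / 2 = 0`
  have hα2 : α / 2 * 2 * 2 = 2 * α := by
    rw [div_mul_eq_mul_div, div_mul_cancel_of_imp fun h => by rw [h, mul_zero], mul_comm]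
  rw [← Nat.cast_smul_eq_nsmul F, smul_smul, add_smul, one_smul]
  congr 2
  push_cast [Nat.cast_sub q.1.one_le]
  linear_combination ((n : F) - 1) * hα2

theorem matsuoMulD_single_single (α : F) (p q : DTr n) (a b : F) :
    matsuoMulD F n α (single p a) (single q b) = (a * b) • pointMulD F α p q := by
  simp [matsuoMulD, smul_smul]

theorem matsuoMulD_sum_single (α : F) :
    matsuoMulD F n α (∑ p, single p 1) = (1 + 2 * α * ((n : F) - 1)) • LinearMap.id := by
  refine lhom_ext fun q b => ?_
  simp only [map_sum, LinearMap.sum_apply, matsuoMulD_single_single, one_mul, ← Finset.smul_sum,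
    sum_pointMulD_left, LinearMap.smul_apply, LinearMap.id_apply, smul_single,
    smul_eq_mul, mul_one, mul_comm b]

end MatsuoAlgebra

theorem matsuo_AnPM_unital_general (n : ℕ) (F : Type*) [Field F]
    (α : F) (hα : 1 + 2 * α * ((n : F) - 1) ≠ 0) :
    ∀ x : DTr n →₀ F,
      matsuoMulD F n α
        ((1 + 2 * α * ((n : F) - 1))⁻¹ • ∑ p : DTr n, Finsupp.single p (1 : F)) x = x := by
  intro x
  rw [map_smul, matsuoMulD_sum_single, LinearMap.smul_apply, LinearMap.smul_apply,
    LinearMap.id_apply, smul_smul, inv_mul_cancel₀ hα, one_smul]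

/-- for `n ≥ 2` and `1 + 2α(n-1) ≠ 0`, the Matsuo algebra `M_α(𝒜_n^±)` over
a field of characteristic `≠ 2` is unital with identity
`(1 + 2α(n-1))⁻¹ ∑_{t ∈ T_n, ε = ±1} (t, ε)`. -/
theorem matsuo_AnPM_unital (n : ℕ) (hn : 2 ≤ n) (F : Type*) [Field F]
    (hchar : (2 : F) ≠ 0) (α : F) (hα : 1 + 2 * α * ((n : F) - 1) ≠ 0) :
    ∀ x : DTr n →₀ F,
      matsuoMulD F n α
        ((1 + 2 * α * ((n : F) - 1))⁻¹ • ∑ p : DTr n, Finsupp.single p (1 : F)) x = x :=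
  matsuo_AnPM_unital_general n F α hα
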